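/- Let X be a standard Borel space. The max-union map (D₁, D₂) ↦ D₁ ∪ D₂ (the multiset union, in which the multiplicity of each element is the maximum of its multiplicities in D₁ and D₂) from Multiset X × Multiset X to Multiset X is measurable, where Multiset X carries the counting σ-algebra and Multiset X × Multiset X the corresponding product σ-algebra. -/

import Mathlib

/- `countIn D E` is the number of elements of the finite multiset `D` lying in the set `E`,
counted with multiplicity. -/
open Classical in
noncomputable def countIn {X : Type*} (D : Multiset X) (E : Set X) : ℕ :=
  (D.filter (· ∈ E)).card

/-- The counting σ-algebra on the space of finite multisets over a measurable space `X`: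
generated by the counting events `C(E,n) = {D | countIn D E = n}` for `E` measurable, `n : ℕ`. -/
def countingMS (X : Type*) [MeasurableSpace X] : MeasurableSpace (Multiset X) :=
  MeasurableSpace.generateFrom
    {C : Set (Multiset X) |
      ∃ (E : Set X) (n : ℕ), MeasurableSet E ∧ C = {D : Multiset X | countIn D E = n}}

/-! A measurable embedding `f : X → ℝ` gives the countable measurable partitions of `X` into the
cells `{x | ⌊f x * 2 ^ m⌋ = k}`, `k : ℤ`. On a cell containing at most one point of `D₁ ∪ D₂`
the count of the max-union is the maximum of the two counts, and once `m` is large the cells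
separate the finitely many points of `D₁ ∪ D₂`. Hence `countIn (D₁ ∪ D₂) E` is the supremum over
`m` of the sums over `k` of these maxima, a measurable function of `(D₁, D₂)`. -/

open Filter MeasureTheory
open scoped ENNReal

theorem Multiset.card_union_of_forall_eq {α : Type*} [DecidableEq α] {s t : Multiset α}
    (h : ∀ a ∈ s ∪ t, ∀ b ∈ s ∪ t, a = b) :
    card (s ∪ t) = max (card s) (card t) := by
  rcases (s ∪ t).empty_or_exists_mem with hst | ⟨x, hx⟩
  · have hs : s = 0 := le_zero.1 (hst ▸ le_union_left)
    have ht : t = 0 := le_zero.1 (hst ▸ le_union_right)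
    simp [hs, ht]
  · have hcard : ∀ u ≤ s ∪ t, card u = count x u := fun u hu =>
      (count_eq_card.2 fun y hy => h x hx y (mem_of_le hu hy)).symm
    rw [hcard _ le_rfl, hcard _ le_union_left, hcard _ le_union_right, count_union]

theorem Filter.eventually_injOn_of_pairwise_eventually_ne {α β ι : Type*} {l : Filter β}
    {g : β → α → ι} (hg : Pairwise fun x y => ∀ᶠ b in l, g b x ≠ g b y) (T : Finset α) :
    ∀ᶠ b in l, Set.InjOn (g b) T := by
  have hpairs : ∀ᶠ b in l, ∀ p ∈ T ×ˢ T, p.1 ≠ p.2 → g b p.1 ≠ g b p.2 :=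
    (eventually_all_finset _).2 fun p _ => by
      by_cases hp : p.1 = p.2
      · simp [hp]
      · exact (hg hp).mono fun b hb _ => hb
  filter_upwards [hpairs] with b hb x hx y hy hxy
  by_contra hne
  exact hb (x, y) (Finset.mem_product.2 ⟨hx, hy⟩) hne hxy

theorem eventually_floor_mul_two_pow_ne {a b : ℝ} (hab : a ≠ b) :
    ∀ᶠ m : ℕ in atTop, ⌊a * 2 ^ m⌋ ≠ ⌊b * 2 ^ m⌋ := by
  have hgrow : Tendsto (fun m : ℕ => |a - b| * 2 ^ m) atTop atTop :=
    (tendsto_pow_atTop_atTop_of_one_lt one_lt_two).const_mul_atTop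
      (abs_pos.2 (sub_ne_zero.2 hab))
  filter_upwards [hgrow.eventually_gt_atTop 1] with m hm heq
  have hlt := Int.abs_sub_lt_one_of_floor_eq_floor heq
  rw [← sub_mul, abs_mul, abs_of_pos (by positivity : (0 : ℝ) < 2 ^ m)] at hlt
  linarith

section countIn

variable {X : Type*}

theorem countIn_mono {D D' : Multiset X} (h : D ≤ D') (E : Set X) :
    countIn D E ≤ countIn D' E := by
  classical
  exact Multiset.card_le_card (Multiset.filter_le_filter _ h)

open Classical in
theorem countIn_cons (a : X) (D : Multiset X) (E : Set X) :
    countIn (a ::ₘ D) E = countIn D E + if a ∈ E then 1 else 0 := by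
  by_cases h : a ∈ E <;> simp [countIn, h]

theorem countIn_union_of_forall_eq [DecidableEq X] {D₁ D₂ : Multiset X} {S : Set X}
    (h : ∀ a ∈ D₁ ∪ D₂, a ∈ S → ∀ b ∈ D₁ ∪ D₂, b ∈ S → a = b) :
    countIn (D₁ ∪ D₂) S = max (countIn D₁ S) (countIn D₂ S) := by
  classical
  unfold countIn
  rw [Multiset.filter_union]
  refine Multiset.card_union_of_forall_eq fun a ha b hb => ?_
  rw [← Multiset.filter_union, Multiset.mem_filter] at ha hb
  exact h a ha.1 ha.2 b hb.1 hb.2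

theorem tsum_countIn_inter_preimage {ι : Type*} (D : Multiset X) (E : Set X) (g : X → ι) :
    ∑' k, (countIn D (E ∩ g ⁻¹' {k}) : ℝ≥0∞) = countIn D E := by
  classical
  induction D using Multiset.induction_on with
  | empty => simp [countIn]
  | cons a D ih =>
    simp only [countIn_cons, Nat.cast_add]
    rw [ENNReal.tsum_add, ih]
    by_cases ha : a ∈ E
    · simp [ha, eq_comm]
    · simp [ha]

theorem measurable_countIn [MeasurableSpace X] {E : Set X} (hE : MeasurableSet E) :
    Measurable[countingMS X] fun D : Multiset X => countIn D E := by
  let := countingMS X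
  exact measurable_to_countable' fun n =>
    MeasurableSpace.measurableSet_generateFrom ⟨E, n, hE, rfl⟩

theorem countIn_union_eq_iSup [DecidableEq X] {ι : Type*} {g : ℕ → X → ι}
    (hg : Pairwise fun x y => ∀ᶠ m in atTop, g m x ≠ g m y) (D₁ D₂ : Multiset X) (E : Set X) :
    (countIn (D₁ ∪ D₂) E : ℝ≥0∞) =
      ⨆ m, ∑' k, ((max (countIn D₁ (E ∩ g m ⁻¹' {k})) (countIn D₂ (E ∩ g m ⁻¹' {k})) : ℕ) :
        ℝ≥0∞) := by
  apply le_antisymm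
  · obtain ⟨m, hm⟩ := (eventually_injOn_of_pairwise_eventually_ne hg (D₁ ∪ D₂).toFinset).exists
    refine le_iSup_of_le m (le_of_eq ?_)
    rw [← tsum_countIn_inter_preimage _ E (g m)]
    refine tsum_congr fun k => ?_
    rw [countIn_union_of_forall_eq fun a ha haS b hb hbS => hm (Multiset.mem_toFinset.2 ha)
      (Multiset.mem_toFinset.2 hb) (haS.2.trans hbS.2.symm)]
  · refine iSup_le fun m => ?_
    rw [← tsum_countIn_inter_preimage _ E (g m)]
    exact ENNReal.tsum_le_tsum fun k => by
      exact_mod_cast max_le (countIn_mono Multiset.le_union_left _)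
        (countIn_mono Multiset.le_union_right _)

theorem measurable_union_of_separating [MeasurableSpace X] [DecidableEq X] {ι : Type*}
    [Countable ι] [MeasurableSpace ι] [MeasurableSingletonClass ι] {g : ℕ → X → ι}
    (hg_meas : ∀ m, Measurable (g m)) (hg : Pairwise fun x y => ∀ᶠ m in atTop, g m x ≠ g m y) :
    Measurable[(countingMS X).prod (countingMS X), countingMS X]
      fun p : Multiset X × Multiset X => p.1 ∪ p.2 := by
  let : MeasurableSpace (Multiset X) := countingMS X
  refine measurable_generateFrom ?_
  rintro _ ⟨E, n, hE, rfl⟩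
  have hcount : Measurable fun p : Multiset X × Multiset X => (countIn (p.1 ∪ p.2) E : ℝ≥0∞) := by
    simp_rw [countIn_union_eq_iSup hg]
    refine Measurable.iSup fun m => Measurable.tsum fun k => ?_
    have hcell := measurable_countIn (hE.inter (hg_meas m (measurableSet_singleton k)))
    exact measurable_from_top.comp ((hcell.comp measurable_fst).max (hcell.comp measurable_snd))
  have hpre : (fun p : Multiset X × Multiset X => p.1 ∪ p.2) ⁻¹' {D | countIn D E = n} =
      (fun p : Multiset X × Multiset X => (countIn (p.1 ∪ p.2) E : ℝ≥0∞)) ⁻¹' {(n : ℝ≥0∞)} := by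
    ext p
    simp
  exact hpre ▸ hcount (measurableSet_singleton _)

end countIn

open Classical in
theorem maxUnion_measurable {X : Type*} [MeasurableSpace X] [StandardBorelSpace X] :
    @Measurable _ _ ((countingMS X).prod (countingMS X)) (countingMS X)
      (fun p : Multiset X × Multiset X => p.1 ∪ p.2) := by
  obtain ⟨f, hf⟩ := exists_measurableEmbedding_real X
  exact measurable_union_of_separating (g := fun m x => ⌊f x * 2 ^ m⌋)
    (fun m => (hf.measurable.mul_const _).floor)
    (fun x y hxy => eventually_floor_mul_two_pow_ne (hf.injective.ne hxy))
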